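/- Let the delay dynamics be affine in the control, f(t,X,u) = f₀(t,X) + G(t,X)u, with f₀, G satisfying Assumption 1. Suppose (u^k)_{k≥1} ⊆ 𝒰 converges weakly in L²([t₀,T];ℝᵐ) to ū ∈ 𝒰, and the corresponding solutions x^k of the delay system (all with the same initial condition φ and uniformly bounded by M₁) converge uniformly on [t₀,T] to x̄. Then x̄ is absolutely continuous and solves the delay system with control ū: x̄(t) = φ(0) + ∫_{t₀}^t ( f₀(s, X̄_h(s)) + G(s, X̄_h(s)) ū(s) ) ds for all t ∈ [t₀,T], with x̄(t₀+θ) = φ(θ) on [−h,0]. -/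

import Mathlib

open MeasureTheory Filter Set
open scoped RealInnerProductSpace Topology

noncomputable section

/-- `ℝⁿ` with the Euclidean norm. -/
abbrev Vec (n : ℕ) := EuclideanSpace ℝ (Fin n)

/-- `ℝ^{(k+1)n}`, the space of tuples `X = (x₀,…,x_k)` with the Euclidean norm. -/
abbrev XVec (k n : ℕ) := PiLp 2 (fun _ : Fin (k + 1) => Vec n)

variable {n m k : ℕ}

/-- Update the `i`-th block of `X`. -/
def updX (X : XVec k n) (i : Fin (k + 1)) (ξ : Vec n) : XVec k n :=
  WithLp.toLp 2 (Function.update X i ξ)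

/-- The delayed-state tuple `X_h(t) = (x(t-h₀),…,x(t-h_k))`. -/
def Xh (hdel : Fin (k + 1) → ℝ) (x : ℝ → Vec n) (t : ℝ) : XVec k n :=
  WithLp.toLp 2 (fun i => x (t - hdel i))

variable {F : Type*} [NormedAddCommGroup F] [NormedSpace ℝ F]

/-- Partial (Fréchet) derivative of `ψ(X,u)` with respect to the block `x_i`. -/
def pdX (ψ : XVec k n → Vec m → F) (i : Fin (k + 1)) (X : XVec k n) (v : Vec m) :
    Vec n →L[ℝ] F :=
  fderiv ℝ (fun ξ => ψ (updX X i ξ) v) (X i)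

/-- Partial (Fréchet) derivative of `ψ(X,u)` with respect to `u`. -/
def pdU (ψ : XVec k n → Vec m → F) (X : XVec k n) (v : Vec m) : Vec m →L[ℝ] F :=
  fderiv ℝ (fun w => ψ X w) v

/-- Partial derivative in `x_i` for a function of `(X,u,λ)`. -/
def pd3X (g : XVec k n → Vec m → Vec n → F) (i : Fin (k + 1)) (X : XVec k n)
    (v : Vec m) (p : Vec n) : Vec n →L[ℝ] F :=
  fderiv ℝ (fun ξ => g (updX X i ξ) v p) (X i)

/-- Partial derivative in `u` for a function of `(X,u,λ)`. -/
def pd3U (g : XVec k n → Vec m → Vec n → F) (X : XVec k n) (v : Vec m) (p : Vec n) :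
    Vec m →L[ℝ] F :=
  fderiv ℝ (fun w => g X w p) v

/-- Partial derivative in `λ` for a function of `(X,u,λ)`. -/
def pd3L (g : XVec k n → Vec m → Vec n → F) (X : XVec k n) (v : Vec m) (p : Vec n) :
    Vec n →L[ℝ] F :=
  fderiv ℝ (fun q => g X v q) p

/-- Gradient of a scalar function of `X` with respect to the block `x_i`. -/
def gradXj (g : XVec k n → ℝ) (i : Fin (k + 1)) (X : XVec k n) : Vec n :=
  gradient (fun ξ => g (updX X i ξ)) (X i)

/-- Gradient in `u` of a scalar function of `(X,u,λ)`. -/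
def grad3U (g : XVec k n → Vec m → Vec n → ℝ) (X : XVec k n) (v : Vec m) (p : Vec n) :
    Vec m :=
  gradient (fun w => g X w p) v

/-- Assumption 1 of the paper for `ψ ∈ {f,ℓ}`. -/
structure Assumption1 {G : Type*} [NormedAddCommGroup G] [NormedSpace ℝ G]
    [MeasurableSpace G] (ψ : ℝ → XVec k n → Vec m → G) (U : Set (Vec m)) (t₀ T : ℝ)
    (μ : ℝ → ℝ) : Prop where
  smooth : ∀ t, ContDiff ℝ 2 (fun q : XVec k n × Vec m => ψ t q.1 q.2)
  meas : ∀ X v, Measurable fun t => ψ t X v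
  μ_meas : Measurable μ
  μ_nonneg : ∀ t, 0 ≤ μ t
  μ_L2 : MemLp μ 2 (volume.restrict (Set.Icc t₀ T))
  bd_val : ∀ t ∈ Set.Icc t₀ T, ∀ (X : XVec k n), ∀ v ∈ U, ‖ψ t X v‖ ≤ μ t * (‖X‖ + 1)
  bd_X : ∀ t ∈ Set.Icc t₀ T, ∀ (X : XVec k n), ∀ v ∈ U, ∀ i,
      ‖pdX (ψ t) i X v‖ ≤ μ t * (‖X‖ + 1)
  bd_U : ∀ t ∈ Set.Icc t₀ T, ∀ (X : XVec k n), ∀ v ∈ U, ‖pdU (ψ t) X v‖ ≤ μ t * (‖X‖ + 1)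
  bd_XX : ∀ t ∈ Set.Icc t₀ T, ∀ (X : XVec k n), ∀ v ∈ U, ∀ i j,
      ‖pdX (fun X' v' => pdX (ψ t) i X' v') j X v‖ ≤ μ t * (‖X‖ + 1)
  bd_XU : ∀ t ∈ Set.Icc t₀ T, ∀ (X : XVec k n), ∀ v ∈ U, ∀ i,
      ‖pdU (fun X' v' => pdX (ψ t) i X' v') X v‖ ≤ μ t * (‖X‖ + 1)
  bd_UX : ∀ t ∈ Set.Icc t₀ T, ∀ (X : XVec k n), ∀ v ∈ U, ∀ i,
      ‖pdX (fun X' v' => pdU (ψ t) X' v') i X v‖ ≤ μ t * (‖X‖ + 1)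
  bd_UU : ∀ t ∈ Set.Icc t₀ T, ∀ (X : XVec k n), ∀ v ∈ U,
      ‖pdU (fun X' v' => pdU (ψ t) X' v') X v‖ ≤ μ t * (‖X‖ + 1)

/-- The Hamiltonian `H(t,X,u,λ) = (ℓ(t,X,u) + λᵀ f(t,X,u))·1_{(-∞,T]}(t)`. -/
def Ham (f : ℝ → XVec k n → Vec m → Vec n) (l : ℝ → XVec k n → Vec m → ℝ) (T : ℝ)
    (t : ℝ) (X : XVec k n) (v : Vec m) (p : Vec n) : ℝ :=
  Set.indicator (Set.Iic T) (fun _ => l t X v + ⟪p, f t X v⟫) t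

/-- A measurable control with values in `U` on `[t₀,T]` (membership in `𝒰`). -/
def IsControl (U : Set (Vec m)) (t₀ T : ℝ) (u : ℝ → Vec m) : Prop :=
  Measurable u ∧ ∀ t ∈ Set.Icc t₀ T, u t ∈ U

/-- (Carathéodory/absolutely continuous) solution of the delay system
`ẋ(t) = f(t,X_h(t),u(t))` a.e. on `[t₀,T]`, `x(t₀+θ)=φ(θ)` on `[-h,0]`. -/
def IsSolution (f : ℝ → XVec k n → Vec m → Vec n) (t₀ T hmax : ℝ)
    (hdel : Fin (k + 1) → ℝ) (φ : ℝ → Vec n) (u : ℝ → Vec m) (x : ℝ → Vec n) : Prop :=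
  (∀ θ ∈ Set.Icc (-hmax) (0 : ℝ), x (t₀ + θ) = φ θ) ∧
  IntervalIntegrable (fun s => f s (Xh hdel x s) (u s)) volume t₀ T ∧
  ∀ t ∈ Set.Icc t₀ T, x t = φ 0 + ∫ s in t₀..t, f s (Xh hdel x s) (u s)

/-- Right-hand side `∑_{j=0}^k ∇_{x_j}H(s+h_j, X_h(s+h_j), u(s+h_j), λ(s+h_j))`
of the costate equation. -/
def costateRHS (f : ℝ → XVec k n → Vec m → Vec n) (l : ℝ → XVec k n → Vec m → ℝ)
    (T : ℝ) (hdel : Fin (k + 1) → ℝ) (u : ℝ → Vec m) (x : ℝ → Vec n)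
    (lam : ℝ → Vec n) (s : ℝ) : Vec n :=
  ∑ j : Fin (k + 1),
    gradXj (fun X => Ham f l T (s + hdel j) X (u (s + hdel j)) (lam (s + hdel j))) j
      (Xh hdel x (s + hdel j))

/-- (Absolutely continuous) solution of the costate equation
`λ̇(t) = -∑_j ∇_{x_j}H(t+h_j, X_h(t+h_j), u(t+h_j), λ(t+h_j))` a.e. on `[t₀,T]`,
with `λ(t) = 0` for `t ≥ T`. -/
def IsCostate (f : ℝ → XVec k n → Vec m → Vec n) (l : ℝ → XVec k n → Vec m → ℝ)
    (t₀ T : ℝ) (hdel : Fin (k + 1) → ℝ) (u : ℝ → Vec m) (x : ℝ → Vec n)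
    (lam : ℝ → Vec n) : Prop :=
  (∀ t, T ≤ t → lam t = 0) ∧
  IntervalIntegrable (costateRHS f l T hdel u x lam) volume t₀ T ∧
  ∀ t ∈ Set.Icc t₀ T, lam t = ∫ s in t..T, costateRHS f l T hdel u x lam s

/-- The cost functional `J(u) = ∫_{t₀}^T ℓ(t, X_h(t), u(t)) dt` (with `x` the state
corresponding to `u`). -/
def cost (l : ℝ → XVec k n → Vec m → ℝ) (t₀ T : ℝ) (hdel : Fin (k + 1) → ℝ)
    (u : ℝ → Vec m) (x : ℝ → Vec n) : ℝ :=
  ∫ t in t₀..T, l t (Xh hdel x t) (u t)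

/-- Squared `L²([t₀,T])` distance between two controls. -/
def dL2sq (t₀ T : ℝ) (u w : ℝ → Vec m) : ℝ :=
  ∫ t in t₀..T, ‖u t - w t‖ ^ 2

/-- `L²([t₀,T])` distance between two controls. -/
def dL2 (t₀ T : ℝ) (u w : ℝ → Vec m) : ℝ :=
  Real.sqrt (dL2sq t₀ T u w)

/-- `L^∞([t₀,T])` (essential sup) distance between two controls. -/
def dLinf (t₀ T : ℝ) (u w : ℝ → Vec m) : ℝ :=
  essSup (fun t => ‖u t - w t‖) (volume.restrict (Set.Icc t₀ T))

/-- Smallest eigenvalue of the positive-definite diagonal matrix with diagonal `c`. -/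
def εmin (c : Fin m → ℝ) : ℝ := ⨅ j, c j

/-- The quadratic form `wᵀ C w` for the diagonal matrix `C = diag c`. -/
def quadC (c : Fin m → ℝ) (w : Vec m) : ℝ := ∑ j, c j * (w j) ^ 2

/-- The vector `C w` for the diagonal matrix `C = diag c`. -/
def diagMul (c : Fin m → ℝ) (w : Vec m) : Vec m := WithLp.toLp 2 (fun j => c j * w j)

/-- Euclidean projection onto `U`: `P_U(q) = argmin_{w ∈ U} ‖q - w‖`. -/
def projU (U : Set (Vec m)) (q : Vec m) : Vec m :=
  Classical.epsilon fun w => w ∈ U ∧ ∀ z ∈ U, ‖q - w‖ ≤ ‖q - z‖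

/-- Assumption 2: `H_uu(t,X,u,λ) ⪰ R ⪰ 0`, with `rmin` the smallest eigenvalue of
`R` (equivalently, `H_uu ⪰ rmin·I` with `rmin ≥ 0`). -/
def Assumption2 (f : ℝ → XVec k n → Vec m → Vec n) (l : ℝ → XVec k n → Vec m → ℝ)
    (t₀ T : ℝ) (rmin : ℝ) : Prop :=
  0 ≤ rmin ∧ ∀ t ∈ Set.Icc t₀ T, ∀ (X : XVec k n) (v : Vec m) (p : Vec n) (w : Vec m),
    rmin * ‖w‖ ^ 2 ≤ pd3U (fun X' v' p' => pd3U (Ham f l T t) X' v' p') X v p w w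

/-- The ESSA iteration: controls `u^i`, states `x^i`, costates `λ^i` and diagonal
matrices `C^i = diag (c i) ≻ 0` with nondecreasing smallest eigenvalues, where for
a.e. `t`, `u^{i+1}(t)` minimizes the augmented Hamiltonian
`v ↦ H(t, X^{i+1}_h(t), v, λ^i(t)) + (v - u^i(t))ᵀ C^{i+1} (v - u^i(t))` over `U`. -/
structure ESSA (f : ℝ → XVec k n → Vec m → Vec n) (l : ℝ → XVec k n → Vec m → ℝ)
    (U : Set (Vec m)) (t₀ T hmax : ℝ) (hdel : Fin (k + 1) → ℝ) (φ : ℝ → Vec n)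
    (u : ℕ → ℝ → Vec m) (x : ℕ → ℝ → Vec n) (lam : ℕ → ℝ → Vec n)
    (c : ℕ → Fin m → ℝ) : Prop where
  ctrl : ∀ i, IsControl U t₀ T (u i)
  state : ∀ i, IsSolution f t₀ T hmax hdel φ (u i) (x i)
  costate : ∀ i, IsCostate f l t₀ T hdel (u i) (x i) (lam i)
  cpos : ∀ i j, 0 < c i j
  cmono : ∀ i, εmin (c i) ≤ εmin (c (i + 1))
  step2 : ∀ i : ℕ, ∀ᵐ t ∂(volume.restrict (Set.Icc t₀ T)), ∀ v ∈ U,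
    Ham f l T t (Xh hdel (x (i + 1)) t) (u (i + 1) t) (lam i t)
        + quadC (c (i + 1)) (u (i + 1) t - u i t)
      ≤ Ham f l T t (Xh hdel (x (i + 1)) t) v (lam i t) + quadC (c (i + 1)) (v - u i t)

/-- Weak convergence in `L²([t₀,T]; ℝᵐ)`. -/
def WeakL2Conv (t₀ T : ℝ) (w : ℕ → ℝ → Vec m) (wbar : ℝ → Vec m) : Prop :=
  ∀ g : ℝ → Vec m, MemLp g 2 (volume.restrict (Set.Icc t₀ T)) →
    Tendsto (fun i => ∫ t in t₀..T, ⟪w i t, g t⟫) atTop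
      (𝓝 (∫ t in t₀..T, ⟪wbar t, g t⟫))

/-- A function is piecewise constant on the grid `ρ` if it is constant on every
interval `[ρ_{j-1}, ρ_j)`. -/
def PiecewiseConstOn {N : ℕ} (ρ : Fin (N + 1) → ℝ) (g : ℝ → Vec m) : Prop :=
  ∀ j : Fin N, ∀ t ∈ Set.Ico (ρ j.castSucc) (ρ j.succ), g t = g (ρ j.castSucc)

end

noncomputable section

variable {n m k : ℕ} {F : Type*} [NormedAddCommGroup F] [NormedSpace ℝ F]

/-- Partial (Fréchet) derivative in the block `x_i` of a function of `X` only. -/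
def pdX0 (g : XVec k n → F) (i : Fin (k + 1)) (X : XVec k n) : Vec n →L[ℝ] F :=
  fderiv ℝ (fun ξ => g (updX X i ξ)) (X i)

/-- Assumption 1 for a control-independent function of `(t,X)` (e.g. `f₀`, `ℓ₀`). -/
structure Assumption1X {G : Type*} [NormedAddCommGroup G] [NormedSpace ℝ G]
    [MeasurableSpace G] (ψ : ℝ → XVec k n → G) (t₀ T : ℝ) (μ : ℝ → ℝ) : Prop where
  smooth : ∀ t, ContDiff ℝ 2 (ψ t)
  meas : ∀ X, Measurable fun t => ψ t X
  μ_meas : Measurable μ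
  μ_nonneg : ∀ t, 0 ≤ μ t
  μ_L2 : MemLp μ 2 (volume.restrict (Set.Icc t₀ T))
  bd_val : ∀ t ∈ Set.Icc t₀ T, ∀ (X : XVec k n), ‖ψ t X‖ ≤ μ t * (‖X‖ + 1)
  bd_X : ∀ t ∈ Set.Icc t₀ T, ∀ (X : XVec k n) (i : Fin (k + 1)),
      ‖pdX0 (ψ t) i X‖ ≤ μ t * (‖X‖ + 1)
  bd_XX : ∀ t ∈ Set.Icc t₀ T, ∀ (X : XVec k n) (i j : Fin (k + 1)),
      ‖pdX0 (fun X' => pdX0 (ψ t) i X') j X‖ ≤ μ t * (‖X‖ + 1)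

/-- Assumption 1 for the control-input matrix `G(t,X) ∈ ℝ^{n×m}`. -/
structure Assumption1G (ψ : ℝ → XVec k n → (Vec m →L[ℝ] Vec n)) (t₀ T : ℝ)
    (μ : ℝ → ℝ) : Prop where
  smooth : ∀ t, ContDiff ℝ 2 (ψ t)
  meas : ∀ (X : XVec k n) (w : Vec m), Measurable fun t => ψ t X w
  μ_meas : Measurable μ
  μ_nonneg : ∀ t, 0 ≤ μ t
  μ_L2 : MemLp μ 2 (volume.restrict (Set.Icc t₀ T))
  bd_val : ∀ t ∈ Set.Icc t₀ T, ∀ (X : XVec k n), ‖ψ t X‖ ≤ μ t * (‖X‖ + 1)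
  bd_X : ∀ t ∈ Set.Icc t₀ T, ∀ (X : XVec k n) (i : Fin (k + 1)),
      ‖pdX0 (ψ t) i X‖ ≤ μ t * (‖X‖ + 1)
  bd_XX : ∀ t ∈ Set.Icc t₀ T, ∀ (X : XVec k n) (i j : Fin (k + 1)),
      ‖pdX0 (fun X' => pdX0 (ψ t) i X') j X‖ ≤ μ t * (‖X‖ + 1)

end

/-!
The state equation is linear in the control, so the only nonlinear quantities, `f₀(s, X_h(s))`
and `G(s, X_h(s))`, are evaluated along the delayed states, which converge uniformly; by
dominated convergence they converge in `L¹`. The remaining term `∫ G(s, X̄_h(s)) u^k(s) ds`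
converges by weak convergence of the controls, tested against `1_{[t₀,t]}(s) G(s, X̄_h(s))ᵀ w`,
which lies in `L²` by the growth bound of Assumption 1. Passing to the limit in the integral
equation satisfied by `x^k` gives the one for `x̄`.
-/

section Generalities

theorem tendstoUniformlyOn_pi_iff {α ι κ : Type*} {β : κ → Type*} [∀ j, UniformSpace (β j)]
    {F : ι → α → ∀ j, β j} {f : α → ∀ j, β j} {p : Filter ι} {s : Set α} :
    TendstoUniformlyOn F f p s ↔
      ∀ j, TendstoUniformlyOn (fun i a => F i a j) (fun a => f a j) p s := by
  simp only [tendstoUniformlyOn_iff_tendsto, Pi.uniformity, tendsto_iInf, tendsto_comap_iff]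
  rfl

theorem tendsto_of_forall_tendsto_inner {E ι : Type*} [NormedAddCommGroup E]
    [InnerProductSpace ℝ E] [FiniteDimensional ℝ E] {l : Filter ι} {v : ι → E} {v₀ : E}
    (h : ∀ w, Tendsto (fun i => ⟪w, v i⟫) l (𝓝 ⟪w, v₀⟫)) : Tendsto v l (𝓝 v₀) := by
  let b := stdOrthonormalBasis ℝ E
  rw [← b.sum_repr' v₀]
  exact (tendsto_finsetSum _ fun j _ => (h (b j)).smul_const (b j)).congr fun i =>
    b.sum_repr' (v i)

theorem measurable_clm_of_measurable_apply {α E F : Type*} [MeasurableSpace α]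
    [NormedAddCommGroup E] [InnerProductSpace ℝ E] [FiniteDimensional ℝ E]
    [NormedAddCommGroup F] [NormedSpace ℝ F] [MeasurableSpace F] [BorelSpace F]
    [SecondCountableTopology F] {A : α → E →L[ℝ] F} (hA : ∀ v, Measurable fun a => A a v) :
    Measurable A := by
  let b := stdOrthonormalBasis ℝ E
  have hA_eq : A = fun a => ∑ j, (innerSL ℝ (b j)).smulRight (A a (b j)) := by
    ext a v
    simp only [FunLike.coe_sum, Finset.sum_apply, ContinuousLinearMap.smulRight_apply,
      innerSL_apply_apply, ← map_smul, ← map_sum, b.sum_repr']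
  rw [hA_eq]
  exact Finset.measurable_sum _ fun j _ =>
    (ContinuousLinearMap.smulRightL ℝ E F (innerSL ℝ (b j))).measurable.comp (hA (b j))

theorem MeasureTheory.IntegrableOn.intervalIntegrable_of_mem_Icc {E : Type*}
    [NormedAddCommGroup E] {f : ℝ → E} {a b c : ℝ} (hf : IntegrableOn f (Icc a c))
    (hb : b ∈ Icc a c) : IntervalIntegrable f volume a b :=
  (hf.mono_set (by rw [uIcc_of_le hb.1]; exact Icc_subset_Icc_right hb.2)).intervalIntegrable

theorem norm_le_mul_add_one_of_growth {X E : Type*} [SeminormedAddCommGroup X]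
    [SeminormedAddCommGroup E] {ψ₀ : X → E} {g M : ℝ} (h : ∀ x, ‖ψ₀ x‖ ≤ g * (‖x‖ + 1))
    {x : X} (hx : ‖x‖ ≤ M) : ‖ψ₀ x‖ ≤ g * (M + 1) := by
  have hg : 0 ≤ g := nonneg_of_mul_nonneg_left ((norm_nonneg _).trans (h x)) (by positivity)
  exact (h x).trans (by gcongr)

theorem tendsto_intervalIntegral_sub_clm_apply {E F : Type*} [NormedAddCommGroup E]
    [NormedSpace ℝ E] [NormedAddCommGroup F] [NormedSpace ℝ F] {a b R : ℝ} (hab : a ≤ b)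
    {A : ℕ → ℝ → E →L[ℝ] F} {Abar : ℝ → E →L[ℝ] F} {w : ℕ → ℝ → E}
    (hA : ∀ i, IntervalIntegrable (fun t => A i t - Abar t) volume a b)
    (hw : ∀ i, ∀ t ∈ Ioc a b, ‖w i t‖ ≤ R)
    (hlim : Tendsto (fun i => ∫ t in a..b, ‖A i t - Abar t‖) atTop (𝓝 0)) :
    Tendsto (fun i => ∫ t in a..b, A i t (w i t) - Abar t (w i t)) atTop (𝓝 0) := by
  refine squeeze_zero_norm (fun i => ?_) (by simpa using hlim.mul_const R)
  refine (intervalIntegral.norm_integral_le_of_norm_le hab (.of_forall fun t ht => ?_)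
    ((hA i).norm.mul_const R)).trans_eq (intervalIntegral.integral_mul_const _ _)
  exact (A i t - Abar t).le_opNorm_of_le (hw i t ht)

end Generalities

section Caratheodory

variable {X E : Type*} [NormedAddCommGroup X] [MeasurableSpace X] [BorelSpace X]
  [SecondCountableTopology X] [NormedAddCommGroup E] [MeasurableSpace E] [BorelSpace E]
  [SecondCountableTopology E] {ψ : ℝ → X → E}

theorem aestronglyMeasurable_comp_of_continuous_of_measurable {μ : Measure ℝ}
    (hc : ∀ t, Continuous (ψ t)) (hm : ∀ x, Measurable fun t => ψ t x)
    {Y : ℝ → X} (hY : AEMeasurable Y μ) :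
    AEStronglyMeasurable (fun t => ψ t (Y t)) μ :=
  ((measurable_uncurry_of_continuous_of_measurable (u := fun x t => ψ t x) hc hm).comp_aemeasurable
    (hY.prodMk aemeasurable_id)).aestronglyMeasurable

theorem memLp_comp_of_norm_le {p : ENNReal} {s : Set ℝ} (hs : IsCompact s) {g : ℝ → ℝ}
    (hc : ∀ t, Continuous (ψ t)) (hm : ∀ x, Measurable fun t => ψ t x)
    (hψg : ∀ t ∈ s, ∀ x, ‖ψ t x‖ ≤ g t * (‖x‖ + 1)) (hg : MemLp g p (volume.restrict s))
    {Y : ℝ → X} (hY : ContinuousOn Y s) :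
    MemLp (fun t => ψ t (Y t)) p (volume.restrict s) := by
  obtain ⟨M, hM⟩ := hs.exists_bound_of_continuousOn hY
  refine (hg.mul_const (M + 1)).of_le
    (aestronglyMeasurable_comp_of_continuous_of_measurable hc hm
      (hY.aemeasurable hs.measurableSet)) ?_
  filter_upwards [ae_restrict_mem hs.measurableSet] with t ht
  exact (norm_le_mul_add_one_of_growth (hψg t ht) (hM t ht)).trans (le_abs_self _)

theorem tendsto_intervalIntegral_norm_comp_sub {a b c : ℝ} (hb : b ∈ Icc a c) {g : ℝ → ℝ}
    (hc : ∀ t, Continuous (ψ t)) (hm : ∀ x, Measurable fun t => ψ t x)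
    (hψg : ∀ t ∈ Icc a c, ∀ x, ‖ψ t x‖ ≤ g t * (‖x‖ + 1)) (hg : IntegrableOn g (Icc a c))
    {Y : ℕ → ℝ → X} {Ybar : ℝ → X} (hY : ∀ i, ContinuousOn (Y i) (Icc a c))
    (hlim : TendstoUniformlyOn Y Ybar atTop (Icc a c)) :
    Tendsto (fun i => ∫ t in a..b, ‖ψ t (Y i t) - ψ t (Ybar t)‖) atTop (𝓝 0) := by
  have hYbar : ContinuousOn Ybar (Icc a c) := hlim.continuousOn (.of_forall hY)
  obtain ⟨M, hM⟩ := isCompact_Icc.exists_bound_of_continuousOn hYbar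
  have hYM : ∀ᶠ i in atTop, ∀ t ∈ Icc a c, ‖Y i t‖ ≤ M + 1 := by
    filter_upwards [Metric.tendstoUniformlyOn_iff.1 hlim 1 one_pos] with i hi t ht
    calc ‖Y i t‖ ≤ ‖Ybar t‖ + dist (Ybar t) (Y i t) := by
          rw [dist_comm, dist_eq_norm]; exact norm_le_norm_add_norm_sub' _ _
      _ ≤ M + 1 := add_le_add (hM t ht) (hi t ht).le
  have hsub : uIoc a b ⊆ Icc a c := by
    rw [uIoc_of_le hb.1]; exact Ioc_subset_Icc_self.trans (Icc_subset_Icc_right hb.2)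
  have hmeas : ∀ Z : ℝ → X, ContinuousOn Z (Icc a c) →
      AEStronglyMeasurable (fun t => ψ t (Z t)) (volume.restrict (uIoc a b)) := fun Z hZ =>
    (aestronglyMeasurable_comp_of_continuous_of_measurable hc hm
      (hZ.aemeasurable measurableSet_Icc)).mono_measure (Measure.restrict_mono hsub le_rfl)
  have hbound : ∀ᶠ i in atTop, ∀ᵐ t, t ∈ uIoc a b →
      ‖‖ψ t (Y i t) - ψ t (Ybar t)‖‖ ≤ g t * (M + 1 + 1) + g t * (M + 1 + 1) := by
    filter_upwards [hYM] with i hi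
    refine .of_forall fun t ht => ?_
    rw [norm_norm]
    exact (norm_sub_le _ _).trans (add_le_add
      (norm_le_mul_add_one_of_growth (hψg t (hsub ht)) (hi t (hsub ht)))
      (norm_le_mul_add_one_of_growth (hψg t (hsub ht)) ((hM t (hsub ht)).trans (by linarith))))
  have hg_ab : IntervalIntegrable g volume a b := hg.intervalIntegrable_of_mem_Icc hb
  rw [← intervalIntegral.integral_zero (a := a) (b := b) (μ := volume)]
  exact intervalIntegral.tendsto_integral_filter_of_dominated_convergence (f := fun _ => 0) _
    (.of_forall fun i => ((hmeas _ (hY i)).sub (hmeas _ hYbar)).norm) hbound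
    ((hg_ab.mul_const _).add (hg_ab.mul_const _))
    (.of_forall fun t ht => by
      have := ((hc t).tendsto _).comp (hlim.tendsto_at (hsub ht))
      simpa using (this.sub_const (ψ t (Ybar t))).norm)

end Caratheodory

theorem WeakL2Conv.tendsto_intervalIntegral_clm_apply {m : ℕ} {F : Type*}
    [NormedAddCommGroup F] [InnerProductSpace ℝ F] [FiniteDimensional ℝ F] {t₀ T t : ℝ}
    {u : ℕ → ℝ → Vec m} {ubar : ℝ → Vec m} (hweak : WeakL2Conv t₀ T u ubar)
    {A : ℝ → Vec m →L[ℝ] F}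
    (hA : ∀ w, MemLp (fun s => ContinuousLinearMap.adjoint (A s) w) 2
      (volume.restrict (Icc t₀ T)))
    (hAu : ∀ i, IntervalIntegrable (fun s => A s (u i s)) volume t₀ t)
    (hAubar : IntervalIntegrable (fun s => A s (ubar s)) volume t₀ t) (ht : t ∈ Icc t₀ T) :
    Tendsto (fun i => ∫ s in t₀..t, A s (u i s)) atTop (𝓝 (∫ s in t₀..t, A s (ubar s))) := by
  have hinner : ∀ w (v : ℝ → Vec m), IntervalIntegrable (fun s => A s (v s)) volume t₀ t →
      ⟪w, ∫ s in t₀..t, A s (v s)⟫ = ∫ s in t₀..T,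
        ⟪v s, (Iic t).indicator (fun s => ContinuousLinearMap.adjoint (A s) w) s⟫ := by
    intro w v hv
    calc ⟪w, ∫ s in t₀..t, A s (v s)⟫ = ∫ s in t₀..t, ⟪w, A s (v s)⟫ :=
          ((innerSL ℝ w).intervalIntegral_comp_comm hv).symm
      _ = ∫ s in t₀..t, ⟪v s, ContinuousLinearMap.adjoint (A s) w⟫ := by
          simp_rw [ContinuousLinearMap.adjoint_inner_right, real_inner_comm]
      _ = ∫ s in t₀..T, (Iic t).indicator
            (fun s => ⟪v s, ContinuousLinearMap.adjoint (A s) w⟫) s :=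
          (intervalIntegral.integral_indicator ht).symm
      _ = _ := by
          congr 1; ext s; by_cases hs : s ∈ Iic t <;> simp [hs]
  refine tendsto_of_forall_tendsto_inner fun w => ?_
  simp_rw [hinner w _ (hAu _), hinner w _ hAubar]
  exact hweak _ ((hA w).indicator measurableSet_Iic)

section Delay

variable {k n : ℕ} {t₀ T hmax : ℝ} {hdel : Fin (k + 1) → ℝ}

theorem mem_Icc_of_monotone_delays (hdel0 : hdel 0 = 0) (hmono : Monotone hdel)
    (hlast : hdel (Fin.last k) = hmax) (j : Fin (k + 1)) : hdel j ∈ Icc 0 hmax :=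
  ⟨hdel0 ▸ hmono (Fin.zero_le j), hlast ▸ hmono (Fin.le_last j)⟩

theorem mapsTo_sub_delay (hdel_mem : ∀ j, hdel j ∈ Icc 0 hmax) (j : Fin (k + 1)) :
    MapsTo (· - hdel j) (Icc t₀ T) (Icc (t₀ - hmax) T) := fun s hs =>
  ⟨by linarith [hs.1, (hdel_mem j).2], by linarith [hs.2, (hdel_mem j).1]⟩

theorem continuousOn_Xh (hdel_mem : ∀ j, hdel j ∈ Icc 0 hmax) {y : ℝ → Vec n}
    (hy : ContinuousOn y (Icc (t₀ - hmax) T)) : ContinuousOn (Xh hdel y) (Icc t₀ T) :=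
  (PiLp.continuous_toLp 2 _).comp_continuousOn (continuousOn_pi.2 fun j =>
    hy.comp (continuousOn_id.sub continuousOn_const) (mapsTo_sub_delay hdel_mem j))

theorem tendstoUniformlyOn_Xh (hdel_mem : ∀ j, hdel j ∈ Icc 0 hmax) {y : ℕ → ℝ → Vec n}
    {ybar : ℝ → Vec n} (hy : TendstoUniformlyOn y ybar atTop (Icc (t₀ - hmax) T)) :
    TendstoUniformlyOn (fun i => Xh hdel (y i)) (Xh hdel ybar) atTop (Icc t₀ T) :=
  (PiLp.uniformContinuous_toLp 2 _).comp_tendstoUniformlyOn (tendstoUniformlyOn_pi_iff.2 fun j =>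
    (hy.comp (· - hdel j)).mono (mapsTo_sub_delay hdel_mem j))

theorem IsSolution.continuousOn {m : ℕ} {f : ℝ → XVec k n → Vec m → Vec n}
    {φ : ℝ → Vec n} {u : ℝ → Vec m} {x : ℝ → Vec n}
    (hx : IsSolution f t₀ T hmax hdel φ u x) (hφ : ContinuousOn φ (Icc (-hmax) 0))
    (hmax0 : 0 ≤ hmax) (hT : t₀ ≤ T) : ContinuousOn x (Icc (t₀ - hmax) T) := by
  rw [← Icc_union_Icc_eq_Icc (by linarith) hT]
  refine .union_of_isClosed ?_ ?_ isClosed_Icc isClosed_Icc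
  · have hmaps : MapsTo (· - t₀) (Icc (t₀ - hmax) t₀) (Icc (-hmax) 0) := fun r hr =>
      ⟨by linarith [hr.1], by linarith [hr.2]⟩
    refine (hφ.comp (continuousOn_id.sub continuousOn_const) hmaps).congr fun r hr => ?_
    simpa using hx.1 (r - t₀) (hmaps hr)
  · have hprim := intervalIntegral.continuousOn_primitive_interval' hx.2.1 left_mem_uIcc
    rw [uIcc_of_le hT] at hprim
    exact (continuousOn_const.add hprim).congr hx.2.2

end Delay

section Affine

variable {k n m : ℕ} {t₀ T t : ℝ} {μ : ℝ → ℝ} {Z : ℝ → XVec k n}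

theorem Assumption1X.intervalIntegrable_comp {f₀ : ℝ → XVec k n → Vec n}
    (hf₀ : Assumption1X f₀ t₀ T μ) (hZ : ContinuousOn Z (Icc t₀ T)) (ht : t ∈ Icc t₀ T) :
    IntervalIntegrable (fun s => f₀ s (Z s)) volume t₀ t :=
  IntegrableOn.intervalIntegrable_of_mem_Icc ((memLp_comp_of_norm_le isCompact_Icc
    (fun s => (hf₀.smooth s).continuous) hf₀.meas hf₀.bd_val hf₀.μ_L2 hZ).integrable one_le_two) ht

variable {G : ℝ → XVec k n → (Vec m →L[ℝ] Vec n)}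

theorem Assumption1G.memLp_comp (hG : Assumption1G G t₀ T μ) (hZ : ContinuousOn Z (Icc t₀ T)) :
    MemLp (fun s => G s (Z s)) 2 (volume.restrict (Icc t₀ T)) :=
  memLp_comp_of_norm_le isCompact_Icc (fun s => (hG.smooth s).continuous)
    (fun X => measurable_clm_of_measurable_apply (hG.meas X)) hG.bd_val hG.μ_L2 hZ

theorem Assumption1G.intervalIntegrable_comp_apply (hG : Assumption1G G t₀ T μ)
    (hZ : ContinuousOn Z (Icc t₀ T)) {U : Set (Vec m)} (hU : Bornology.IsBounded U)
    {w : ℝ → Vec m} (hw : IsControl U t₀ T w) (ht : t ∈ Icc t₀ T) :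
    IntervalIntegrable (fun s => G s (Z s) (w s)) volume t₀ t := by
  obtain ⟨R, -, hR⟩ := hU.exists_pos_norm_le
  have hGZ := (hG.memLp_comp hZ).integrable one_le_two
  refine IntegrableOn.intervalIntegrable_of_mem_Icc ((hGZ.norm.mul_const R).mono'
    (isBoundedBilinearMap_apply.continuous.comp_aestronglyMeasurable₂ hGZ.aestronglyMeasurable
      hw.1.aestronglyMeasurable) ?_) ht
  filter_upwards [ae_restrict_mem measurableSet_Icc] with s hs
  exact (G s (Z s)).le_opNorm_of_le (hR _ (hw.2 s hs))

theorem Assumption1G.memLp_adjoint_comp_apply (hG : Assumption1G G t₀ T μ)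
    (hZ : ContinuousOn Z (Icc t₀ T)) (v : Vec n) :
    MemLp (fun s => ContinuousLinearMap.adjoint (G s (Z s)) v) 2 (volume.restrict (Icc t₀ T)) := by
  have hGZ := hG.memLp_comp hZ
  refine (hGZ.const_smul ‖v‖).of_le ((ContinuousLinearMap.adjoint.continuous.clm_apply
    continuous_const).comp_aestronglyMeasurable hGZ.1) (.of_forall fun s => ?_)
  calc ‖ContinuousLinearMap.adjoint (G s (Z s)) v‖
      ≤ ‖ContinuousLinearMap.adjoint (G s (Z s))‖ * ‖v‖ := ContinuousLinearMap.le_opNorm _ _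
    _ = ‖‖v‖ • G s (Z s)‖ := by
      rw [LinearIsometryEquiv.norm_map, norm_smul, norm_norm, mul_comm]

variable {f₀ : ℝ → XVec k n → Vec n} {U : Set (Vec m)} {u : ℕ → ℝ → Vec m}
  {Y : ℕ → ℝ → XVec k n} {Ybar : ℝ → XVec k n}

theorem tendsto_intervalIntegral_affine_sub (hf₀ : Assumption1X f₀ t₀ T μ)
    (hG : Assumption1G G t₀ T μ) (hU : Bornology.IsBounded U) (hu : ∀ i, IsControl U t₀ T (u i))
    (hY : ∀ i, ContinuousOn (Y i) (Icc t₀ T))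
    (hlim : TendstoUniformlyOn Y Ybar atTop (Icc t₀ T)) (ht : t ∈ Icc t₀ T) :
    Tendsto (fun i => ∫ s in t₀..t, (f₀ s (Y i s) - f₀ s (Ybar s))
      + (G s (Y i s) (u i s) - G s (Ybar s) (u i s))) atTop (𝓝 0) := by
  obtain ⟨R, -, hR⟩ := hU.exists_pos_norm_le
  have hYbar : ContinuousOn Ybar (Icc t₀ T) := hlim.continuousOn (.of_forall hY)
  have hμ : IntegrableOn μ (Icc t₀ T) := hf₀.μ_L2.integrable one_le_two
  have hG_int : ∀ {Z}, ContinuousOn Z (Icc t₀ T) →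
      IntervalIntegrable (fun s => G s (Z s)) volume t₀ t := fun hZ =>
    IntegrableOn.intervalIntegrable_of_mem_Icc ((hG.memLp_comp hZ).integrable one_le_two) ht
  have hf₀_lim : Tendsto (fun i => ∫ s in t₀..t, f₀ s (Y i s) - f₀ s (Ybar s)) atTop (𝓝 0) :=
    squeeze_zero_norm (fun i => intervalIntegral.norm_integral_le_integral_norm ht.1)
      (tendsto_intervalIntegral_norm_comp_sub ht (fun s => (hf₀.smooth s).continuous) hf₀.meas
        hf₀.bd_val hμ hY hlim)
  have hG_lim : Tendsto (fun i => ∫ s in t₀..t, G s (Y i s) (u i s) - G s (Ybar s) (u i s))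
      atTop (𝓝 0) :=
    tendsto_intervalIntegral_sub_clm_apply ht.1 (fun i => (hG_int (hY i)).sub (hG_int hYbar))
      (fun i s hs => hR _ ((hu i).2 s ⟨hs.1.le, hs.2.trans ht.2⟩))
      (tendsto_intervalIntegral_norm_comp_sub ht (fun s => (hG.smooth s).continuous)
        (fun X => measurable_clm_of_measurable_apply (hG.meas X)) hG.bd_val hμ hY hlim)
  rw [← add_zero 0]
  refine (hf₀_lim.add hG_lim).congr fun i => (intervalIntegral.integral_add ?_ ?_).symm
  · exact (hf₀.intervalIntegrable_comp (hY i) ht).sub (hf₀.intervalIntegrable_comp hYbar ht)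
  · exact (hG.intervalIntegrable_comp_apply (hY i) hU (hu i) ht).sub
      (hG.intervalIntegrable_comp_apply hYbar hU (hu i) ht)

theorem tendsto_intervalIntegral_affine (hf₀ : Assumption1X f₀ t₀ T μ)
    (hG : Assumption1G G t₀ T μ) (hU : Bornology.IsBounded U) {ubar : ℝ → Vec m}
    (hu : ∀ i, IsControl U t₀ T (u i)) (hubar : IsControl U t₀ T ubar)
    (hweak : WeakL2Conv t₀ T u ubar) (hY : ∀ i, ContinuousOn (Y i) (Icc t₀ T))
    (hlim : TendstoUniformlyOn Y Ybar atTop (Icc t₀ T)) (ht : t ∈ Icc t₀ T) :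
    Tendsto (fun i => ∫ s in t₀..t, f₀ s (Y i s) + G s (Y i s) (u i s)) atTop
      (𝓝 (∫ s in t₀..t, f₀ s (Ybar s) + G s (Ybar s) (ubar s))) := by
  have hYbar : ContinuousOn Ybar (Icc t₀ T) := hlim.continuousOn (.of_forall hY)
  have hf₀_int := hf₀.intervalIntegrable_comp hYbar ht
  have hGw_int : ∀ {w}, IsControl U t₀ T w →
      IntervalIntegrable (fun s => G s (Ybar s) (w s)) volume t₀ t := fun hw =>
    hG.intervalIntegrable_comp_apply hYbar hU hw ht
  have hweak_lim := hweak.tendsto_intervalIntegral_clm_apply (hG.memLp_adjoint_comp_apply hYbar)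
    (fun i => hGw_int (hu i)) (hGw_int hubar) ht
  have hsplit : ∀ i, ∫ s in t₀..t, f₀ s (Y i s) + G s (Y i s) (u i s) =
      (∫ s in t₀..t, (f₀ s (Y i s) - f₀ s (Ybar s))
        + (G s (Y i s) (u i s) - G s (Ybar s) (u i s)))
      + ((∫ s in t₀..t, f₀ s (Ybar s)) + ∫ s in t₀..t, G s (Ybar s) (u i s)) := fun i => by
    rw [← intervalIntegral.integral_add hf₀_int (hGw_int (hu i)),
      ← intervalIntegral.integral_add _ (hf₀_int.add (hGw_int (hu i)))]
    · exact intervalIntegral.integral_congr fun s _ => by abel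
    · exact ((hf₀.intervalIntegrable_comp (hY i) ht).sub hf₀_int).add
        ((hG.intervalIntegrable_comp_apply (hY i) hU (hu i) ht).sub (hGw_int (hu i)))
  rw [intervalIntegral.integral_add hf₀_int (hGw_int hubar), ← zero_add (_ + _)]
  exact ((tendsto_intervalIntegral_affine_sub hf₀ hG hU hu hY hlim ht).add
    (tendsto_const_nhds.add hweak_lim)).congr fun i => (hsplit i).symm

end Affine

/-- For control-affine delay dynamics, uniform limits of states along a weakly `L²`
convergent sequence of controls solve the delay system driven by the weak limit. -/
theorem affine_state_weak_limit
    {n m k : ℕ} (t₀ T hmax : ℝ) (hdel : Fin (k + 1) → ℝ) (U : Set (Vec m))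
    (f : ℝ → XVec k n → Vec m → Vec n) (μ : ℝ → ℝ)
    (hT : t₀ < T)
    (hdel0 : hdel 0 = 0) (hmono : StrictMono hdel) (hlast : hdel (Fin.last k) = hmax)
    (hU : IsCompact U)
    (f₀ : ℝ → XVec k n → Vec n) (G : ℝ → XVec k n → (Vec m →L[ℝ] Vec n)) (μ : ℝ → ℝ)
    (hf₀ : Assumption1X f₀ t₀ T μ) (hG : Assumption1G G t₀ T μ)
    (f : ℝ → XVec k n → Vec m → Vec n)
    (hfeq : f = fun t X v => f₀ t X + G t X v)
    (φ : ℝ → Vec n) (hφ : ContinuousOn φ (Set.Icc (-hmax) (0 : ℝ)))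
    (u : ℕ → ℝ → Vec m) (hu : ∀ i, IsControl U t₀ T (u i))
    (ubar : ℝ → Vec m) (hubar : IsControl U t₀ T ubar)
    (hweak : WeakL2Conv t₀ T u ubar)
    (x : ℕ → ℝ → Vec n)
    (hx : ∀ i, IsSolution f t₀ T hmax hdel φ (u i) (x i))
    (xbar : ℝ → Vec n)
    (hunif : TendstoUniformlyOn (fun i => x i) xbar atTop (Set.Icc (t₀ - hmax) T)) :
    IsSolution f t₀ T hmax hdel φ ubar xbar := by
  subst hfeq
  have hdel_mem := mem_Icc_of_monotone_delays hdel0 hmono.monotone hlast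
  have hmax0 : 0 ≤ hmax := hdel0 ▸ (hdel_mem 0).2
  have hhist : ∀ θ ∈ Icc (-hmax) 0, xbar (t₀ + θ) = φ θ := fun θ hθ =>
    tendsto_nhds_unique (hunif.tendsto_at ⟨by linarith [hθ.1], by linarith [hθ.2]⟩)
      (tendsto_const_nhds.congr fun i => ((hx i).1 θ hθ).symm)
  have hxc : ∀ i, ContinuousOn (x i) (Icc (t₀ - hmax) T) := fun i =>
    (hx i).continuousOn hφ hmax0 hT.le
  have hYbar := continuousOn_Xh hdel_mem (hunif.continuousOn (.of_forall hxc))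
  refine ⟨hhist, (hf₀.intervalIntegrable_comp hYbar ⟨hT.le, le_rfl⟩).add
    (hG.intervalIntegrable_comp_apply hYbar hU.isBounded hubar ⟨hT.le, le_rfl⟩), fun t ht => ?_⟩
  refine tendsto_nhds_unique (hunif.tendsto_at ⟨by linarith [ht.1], ht.2⟩) ?_
  refine (tendsto_const_nhds.add (tendsto_intervalIntegral_affine hf₀ hG hU.isBounded hu hubar
    hweak (fun i => continuousOn_Xh hdel_mem (hxc i)) (tendstoUniformlyOn_Xh hdel_mem hunif)
    ht)).congr fun i => ((hx i).2.2 t ht).symm
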